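/- arXiv:math/0511616 — 13 statements merged into one kernel-verified Lean document; each statement's English description precedes it below -/
import Mathlib

section
/- Let G be a group acting on a type α and let ⫶ be a ternary relation on subsets of α satisfying invariance, monotonicity, base monotonicity, transitivity, normality and extension. Then for all sets A, B, C, D ⊆ α: if A ⫶_D B∪C and B ⫶_D C, then A∪B ⫶_D C. -/
open scoped Pointwise

/-! Extension lets us add the base `D` to the right-hand side of `A ⫶_D B ∪ C`: the copy of `A`
it produces is moved back by an element fixing `B ∪ C ∪ D` pointwise, so invariance gives
`A ⫶_D B ∪ C ∪ D`. Base monotonicity and monotonicity turn this into `A ⫶_{B ∪ D} C`, and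
normality followed by transitivity through `B ∪ D ⫶_D C` yields `A ∪ B ⫶_D C`. -/

open Set

section Independence

variable {α G : Type*} [Group G] [MulAction G α] {ind : Set α → Set α → Set α → Prop}

theorem smul_set_eq_self_of_forall_smul_eq {g : G} {S : Set α} (h : ∀ x ∈ S, g • x = x) :
    g • S = S := by
  rw [← image_smul]
  exact EqOn.image_eq_self h

theorem ind_union_base_of_extension
    (inv : ∀ (g : G) (A B C : Set α), ind A C B → ind (g • A) (g • C) (g • B))
    (ext : ∀ A B C Bhat : Set α, ind A C B → B ⊆ Bhat →
      ∃ (A' : Set α) (g : G), (∀ x ∈ B ∪ C, g • x = x) ∧ g • A = A' ∧ ind A' C Bhat)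
    {A B C : Set α} (h : ind A C B) : ind A C (B ∪ C) := by
  obtain ⟨_, g, hfix, rfl, hgA⟩ := ext A B C (B ∪ C) h subset_union_left
  have hfix_inv : ∀ S ⊆ B ∪ C, g⁻¹ • S = S := fun S hS =>
    smul_set_eq_self_of_forall_smul_eq fun x hx => inv_smul_eq_iff.2 (hfix x (hS hx)).symm
  simpa only [inv_smul_smul, hfix_inv C subset_union_right, hfix_inv _ subset_rfl]
    using inv g⁻¹ _ _ _ hgA

theorem ind_union_left_of_ind_union_base
    (mono : ∀ A B C A' B' : Set α, ind A C B → A' ⊆ A → B' ⊆ B → ind A' C B')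
    (trans : ∀ A B C D : Set α, D ⊆ C → C ⊆ B → ind B C A → ind C D A → ind B D A)
    (normal : ∀ A B C : Set α, ind A C B → ind (A ∪ C) C B)
    {A B C D : Set α} (hA : ind A (B ∪ D) C) (hB : ind B D C) : ind (A ∪ B) D C := by
  have hABD : ind (A ∪ (B ∪ D)) D C :=
    trans C _ (B ∪ D) D subset_union_right subset_union_right (normal _ _ _ hA) (normal _ _ _ hB)
  exact mono _ _ _ _ _ hABD (union_subset_union_right A subset_union_left) subset_rfl

end Independence

/-- Proposition on shifting: if `⫶` satisfies invariance, monotonicity,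
base monotonicity, transitivity, normality and extension, then
`A ⫶_D B∪C` and `B ⫶_D C` imply `A∪B ⫶_D C`. -/
theorem stmt_1 {α G : Type*} [Group G] [MulAction G α]
    (ind : Set α → Set α → Set α → Prop)
    (inv : ∀ (g : G) (A B C : Set α), ind A C B → ind (g • A) (g • C) (g • B))
    (mono : ∀ A B C A' B' : Set α, ind A C B → A' ⊆ A → B' ⊆ B → ind A' C B')
    (base : ∀ A B C D : Set α, D ⊆ C → C ⊆ B → ind A D B → ind A C B)
    (trans : ∀ A B C D : Set α, D ⊆ C → C ⊆ B → ind B C A → ind C D A → ind B D A)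
    (normal : ∀ A B C : Set α, ind A C B → ind (A ∪ C) C B)
    (ext : ∀ A B C Bhat : Set α, ind A C B → B ⊆ Bhat →
      ∃ (A' : Set α) (g : G), (∀ x ∈ B ∪ C, g • x = x) ∧ g • A = A' ∧ ind A' C Bhat)
    (A B C D : Set α) (h1 : ind A D (B ∪ C)) (h2 : ind B D C) :
    ind (A ∪ B) D C := by
  have hBCD : ind A D (B ∪ C ∪ D) := ind_union_base_of_extension inv ext h1
  have hBD : ind A (B ∪ D) (B ∪ C ∪ D) :=
    base _ _ _ _ subset_union_right (union_subset_union_left D subset_union_left) hBCD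
  have hA : ind A (B ∪ D) C :=
    mono _ _ _ _ _ hBD subset_rfl (subset_union_right.trans subset_union_left)
  exact ind_union_left_of_ind_union_base mono trans normal hA h2
end

section
/- Let c be a closure operator on subsets of a type α and define M-dividing independence by A ⫶M_C B iff for every C' with C ⊆ C' ⊆ c(B∪C) one has c(A∪C') ∩ c(B∪C') = c(C'). Then ⫶M satisfies monotonicity, base monotonicity, transitivity, normality, and anti-reflexivity (if {a} ⫶M_B {a} then a ∈ c(B)). If moreover c is finitary (every x ∈ c(S) lies in c(F) for some finite F ⊆ S), then ⫶M satisfies finite character. -/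
/-- M-dividing independence relative to a closure operator `c`:
`A ⫶M_C B` iff `c(A∪C') ∩ c(B∪C') = c(C')` for every `C'` with `C ⊆ C' ⊆ c(B∪C)`. -/
def mDiv {α : Type*} (c : Set α → Set α) (A C B : Set α) : Prop :=
  ∀ C' : Set α, C ⊆ C' → C' ⊆ c (B ∪ C) → c (A ∪ C') ∩ c (B ∪ C') = c C'

section MDiv

variable {α : Type*} {c : Set α → Set α} {A A' B B' C D : Set α}

lemma closure_subset_inter_closure_union (hc : Monotone c) (X Y C' : Set α) :
    c C' ⊆ c (X ∪ C') ∩ c (Y ∪ C') :=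
  Set.subset_inter (hc Set.subset_union_right) (hc Set.subset_union_right)

lemma mDiv_of_inter_subset (hc : Monotone c)
    (h : ∀ C', C ⊆ C' → C' ⊆ c (B ∪ C) → c (A ∪ C') ∩ c (B ∪ C') ⊆ c C') : mDiv c A C B :=
  fun C' hC hC' => (h C' hC hC').antisymm (closure_subset_inter_closure_union hc _ _ _)

lemma mDiv.mono (hc : Monotone c) (h : mDiv c A C B) (hA : A' ⊆ A) (hB : B' ⊆ B) :
    mDiv c A' C B' := by
  refine mDiv_of_inter_subset hc fun C' hC hC' => ?_
  rw [← h C' hC (hC'.trans (hc (Set.union_subset_union_left _ hB)))]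
  exact Set.inter_subset_inter (hc (Set.union_subset_union_left _ hA))
    (hc (Set.union_subset_union_left _ hB))

lemma mDiv.base_mono (h : mDiv c A D B) (hDC : D ⊆ C) (hCB : C ⊆ B) : mDiv c A C B := by
  intro C' hC hC'
  rw [Set.union_eq_self_of_subset_right hCB] at hC'
  exact h C' (hDC.trans hC) (by rwa [Set.union_eq_self_of_subset_right (hDC.trans hCB)])

/-- The base `C` is absorbed into `C ∪ C'`, which is then a legitimate base extension for
`B ⫶M_C A`; this reduces `c(B∪C') ∩ c(A∪C')` to `c(C ∪ C') ∩ c(A∪C')`. -/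
lemma mDiv.trans (hc : Monotone c) (hext : ∀ X, X ⊆ c X) (hDC : D ⊆ C)
    (hBC : mDiv c B C A) (hCD : mDiv c C D A) : mDiv c B D A := by
  refine mDiv_of_inter_subset hc fun C' hC hC' => ?_
  have hC'A : C' ⊆ c (A ∪ C) := hC'.trans (hc (Set.union_subset_union_right _ hDC))
  have hCC'A : C ∪ C' ⊆ c (A ∪ C) :=
    Set.union_subset (Set.subset_union_right.trans (hext _)) hC'A
  have hunion : C' ⊆ C ∪ C' := Set.subset_union_right
  calc c (B ∪ C') ∩ c (A ∪ C')
      ⊆ c (B ∪ (C ∪ C')) ∩ c (A ∪ (C ∪ C')) ∩ c (A ∪ C') :=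
        Set.subset_inter (Set.inter_subset_inter (hc (Set.union_subset_union_right _ hunion))
          (hc (Set.union_subset_union_right _ hunion))) Set.inter_subset_right
    _ = c (C ∪ C') ∩ c (A ∪ C') := by rw [hBC _ Set.subset_union_left hCC'A]
    _ = c C' := hCD C' hC hC'

lemma mDiv.union_base (h : mDiv c A C B) : mDiv c (A ∪ C) C B := by
  intro C' hC hC'
  rw [Set.union_assoc, Set.union_eq_self_of_subset_left hC]
  exact h C' hC hC'

lemma mem_closure_of_mDiv_singleton_self (hc : Monotone c) (hext : ∀ X, X ⊆ c X) {a : α}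
    (h : mDiv c {a} B {a}) : a ∈ c B := by
  have hB := h B subset_rfl ((hext _).trans (hc Set.subset_union_right))
  rw [Set.inter_self] at hB
  exact hB ▸ hext _ (Set.mem_union_left _ rfl)

lemma mDiv_of_forall_finite (hc : Monotone c)
    (hfin : ∀ (S : Set α) (x : α), x ∈ c S → ∃ F : Finset α, ↑F ⊆ S ∧ x ∈ c ↑F)
    (h : ∀ A₀ ⊆ A, A₀.Finite → mDiv c A₀ C B) : mDiv c A C B := by
  refine mDiv_of_inter_subset hc fun C' hC hC' x hx => ?_
  obtain ⟨F, hFsub, hxF⟩ := hfin _ x hx.1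
  have hF : (↑F : Set α) ⊆ (↑F ∩ A) ∪ C' := fun y hy => (hFsub hy).imp (fun hyA => ⟨hy, hyA⟩) id
  rw [← h (↑F ∩ A) Set.inter_subset_right (F.finite_toSet.inter_of_left A) C' hC hC']
  exact ⟨hc hF hxF, hx.2⟩

end MDiv

theorem stmt_4_general {α : Type*} (c : Set α → Set α)
    (cmono : ∀ A B : Set α, A ⊆ B → c A ⊆ c B)
    (cext : ∀ A : Set α, A ⊆ c A) :
    (∀ A B C A' B' : Set α, mDiv c A C B → A' ⊆ A → B' ⊆ B → mDiv c A' C B') ∧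
    (∀ A B C D : Set α, D ⊆ C → C ⊆ B → mDiv c A D B → mDiv c A C B) ∧
    (∀ A B C D : Set α, D ⊆ C → C ⊆ B → mDiv c B C A → mDiv c C D A → mDiv c B D A) ∧
    (∀ A B C : Set α, mDiv c A C B → mDiv c (A ∪ C) C B) ∧
    (∀ (a : α) (B : Set α), mDiv c {a} B {a} → a ∈ c B) ∧
    ((∀ (S : Set α) (x : α), x ∈ c S → ∃ F : Finset α, ↑F ⊆ S ∧ x ∈ c ↑F) →
      ∀ A B C : Set α, (∀ A₀ : Set α, A₀ ⊆ A → A₀.Finite → mDiv c A₀ C B) → mDiv c A C B) := by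
  have hc : Monotone c := fun A B h => cmono A B h
  exact ⟨fun _ _ _ _ _ h hA hB => h.mono hc hA hB,
    fun _ _ _ _ hDC hCB h => h.base_mono hDC hCB,
    fun _ _ _ _ hDC _ hBC hCD => hBC.trans hc cext hDC hCD,
    fun _ _ _ h => h.union_base,
    fun _ _ h => mem_closure_of_mDiv_singleton_self hc cext h,
    fun hfin _ _ _ h => mDiv_of_forall_finite hc hfin h⟩

/-- basic properties of M-dividing: for any closure operator `c`,
`⫶M` satisfies monotonicity, base monotonicity, transitivity, normality and
anti-reflexivity; and if `c` is finitary it satisfies finite character. -/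
theorem stmt_4 {α : Type*} (c : Set α → Set α)
    (cmono : ∀ A B : Set α, A ⊆ B → c A ⊆ c B)
    (cext : ∀ A : Set α, A ⊆ c A)
    (cidem : ∀ A : Set α, c (c A) = c A) :
    (∀ A B C A' B' : Set α, mDiv c A C B → A' ⊆ A → B' ⊆ B → mDiv c A' C B') ∧
    (∀ A B C D : Set α, D ⊆ C → C ⊆ B → mDiv c A D B → mDiv c A C B) ∧
    (∀ A B C D : Set α, D ⊆ C → C ⊆ B → mDiv c B C A → mDiv c C D A → mDiv c B D A) ∧
    (∀ A B C : Set α, mDiv c A C B → mDiv c (A ∪ C) C B) ∧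
    (∀ (a : α) (B : Set α), mDiv c {a} B {a} → a ∈ c B) ∧
    ((∀ (S : Set α) (x : α), x ∈ c S → ∃ F : Finset α, ↑F ⊆ S ∧ x ∈ c ↑F) →
      ∀ A B C : Set α, (∀ A₀ : Set α, A₀ ⊆ A → A₀.Finite → mDiv c A₀ C B) → mDiv c A C B) :=
  stmt_4_general c cmono cext
end

section
/- Let G be a group acting on a type α. Any ternary relation ⫶ on subsets of α satisfying invariance, monotonicity, base monotonicity, extension and local character also satisfies existence. -/
open scoped Pointwise

universe u

theorem stmt_6_general {α : Type u} {G : Type*} [Group G] [MulAction G α]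
    (ind : Set α → Set α → Set α → Prop)
    (mono : ∀ A B C A' B' : Set α, ind A C B → A' ⊆ A → B' ⊆ B → ind A' C B')
    (base : ∀ A B C D : Set α, D ⊆ C → C ⊆ B → ind A D B → ind A C B)
    (ext : ∀ A B C Bhat : Set α, ind A C B → B ⊆ Bhat →
      ∃ (A' : Set α) (g : G), (∀ x ∈ B ∪ C, g • x = x) ∧ g • A = A' ∧ ind A' C Bhat)
    (loc : ∀ A : Set α, ∃ κ : Cardinal.{u}, ∀ B : Set α,
      ∃ C : Set α, C ⊆ B ∧ Cardinal.mk ↥C < κ ∧ ind A C B) :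
    ∀ A B C : Set α,
      ∃ (A' : Set α) (g : G), (∀ x ∈ C, g • x = x) ∧ g • A = A' ∧ ind A' C B := by
  intro A B C
  -- Local character yields a base `D ⊆ C` with `A ⫶_D C`; since `D ⊆ C`, fixing `C ∪ D` is fixing `C`.
  obtain ⟨κ, hκ⟩ := loc A
  obtain ⟨D, hDC, -, hAD⟩ := hκ C
  obtain ⟨A', g, hfix, rfl, hA'D⟩ := ext A C D (B ∪ C) hAD Set.subset_union_right
  have hA'C : ind (g • A) C (B ∪ C) := base _ _ _ _ hDC Set.subset_union_right hA'D
  exact ⟨g • A, g, fun x hx => hfix x (Or.inl hx), rfl,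
    mono _ _ _ _ _ hA'C subset_rfl Set.subset_union_left⟩

/-- any relation satisfying invariance, monotonicity, base monotonicity,
extension and local character also satisfies existence. -/
theorem stmt_6 {α : Type u} {G : Type*} [Group G] [MulAction G α]
    (ind : Set α → Set α → Set α → Prop)
    (inv : ∀ (g : G) (A B C : Set α), ind A C B → ind (g • A) (g • C) (g • B))
    (mono : ∀ A B C A' B' : Set α, ind A C B → A' ⊆ A → B' ⊆ B → ind A' C B')
    (base : ∀ A B C D : Set α, D ⊆ C → C ⊆ B → ind A D B → ind A C B)
    (ext : ∀ A B C Bhat : Set α, ind A C B → B ⊆ Bhat →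
      ∃ (A' : Set α) (g : G), (∀ x ∈ B ∪ C, g • x = x) ∧ g • A = A' ∧ ind A' C Bhat)
    (loc : ∀ A : Set α, ∃ κ : Cardinal.{u}, ∀ B : Set α,
      ∃ C : Set α, C ⊆ B ∧ Cardinal.mk ↥C < κ ∧ ind A C B) :
    ∀ A B C : Set α,
      ∃ (A' : Set α) (g : G), (∀ x ∈ C, g • x = x) ∧ g • A = A' ∧ ind A' C B :=
  stmt_6_general ind mono base ext loc
end

section
/- Let G be a group acting on a type α. Any ternary relation ⫶ on subsets of α satisfying invariance, monotonicity, transitivity, normality, existence and symmetry also satisfies extension. -/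
open scoped Pointwise

/-!
Take `A'` from existence over the base `B ∪ C` against `B̂`, so `A' ⫶_{B ∪ C} B̂` and `A' ≡_{B ∪ C} A`.
Since the conjugating element fixes `B` and `C` pointwise, invariance turns `A ⫶_C B` into
`A' ⫶_C B`. Normality and transitivity (read on the right via symmetry) then chain the two
independences into `A' ⫶_C B̂ ∪ B ∪ C`, and monotonicity drops the extra sets.
-/

section Independence

variable {α : Type*} (ind : Set α → Set α → Set α → Prop)

theorem ind_smul_of_forall_smul_eq {G : Type*} [Group G] [MulAction G α]
    (inv : ∀ (g : G) (A B C : Set α), ind A C B → ind (g • A) (g • C) (g • B))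
    {A B C : Set α} {g : G} (hAB : ind A C B) (hg : ∀ x ∈ B ∪ C, g • x = x) :
    ind (g • A) C B := by
  have hgB : g • B = B := MulAction.set_mem_fixedBy_of_subset_fixedBy
    fun x hx => hg x (Or.inl hx)
  have hgC : g • C = C := MulAction.set_mem_fixedBy_of_subset_fixedBy
    fun x hx => hg x (Or.inr hx)
  simpa only [hgB, hgC] using inv g A B C hAB

theorem ind_of_ind_of_ind_union
    (mono : ∀ A B C A' B' : Set α, ind A C B → A' ⊆ A → B' ⊆ B → ind A' C B')
    (trans : ∀ A B C D : Set α, D ⊆ C → C ⊆ B → ind B C A → ind C D A → ind B D A)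
    (normal : ∀ A B C : Set α, ind A C B → ind (A ∪ C) C B)
    (symm : ∀ A B C : Set α, ind A C B ↔ ind B C A)
    {A B C D : Set α} (hB : ind A C B) (hD : ind A (B ∪ C) D) : ind A C D := by
  have hBC : ind (B ∪ C) C A := normal B A C ((symm A B C).mp hB)
  have hDBC : ind (D ∪ (B ∪ C)) (B ∪ C) A := normal D A (B ∪ C) ((symm A D (B ∪ C)).mp hD)
  have hchain : ind (D ∪ (B ∪ C)) C A :=
    trans A (D ∪ (B ∪ C)) (B ∪ C) C Set.subset_union_right Set.subset_union_right hDBC hBC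
  exact mono A (D ∪ (B ∪ C)) C A D ((symm A _ C).mpr hchain) le_rfl Set.subset_union_left

end Independence

/-- any relation satisfying invariance, monotonicity, transitivity,
normality, existence and symmetry also satisfies extension. -/
theorem stmt_7 {α G : Type*} [Group G] [MulAction G α]
    (ind : Set α → Set α → Set α → Prop)
    (inv : ∀ (g : G) (A B C : Set α), ind A C B → ind (g • A) (g • C) (g • B))
    (mono : ∀ A B C A' B' : Set α, ind A C B → A' ⊆ A → B' ⊆ B → ind A' C B')
    (trans : ∀ A B C D : Set α, D ⊆ C → C ⊆ B → ind B C A → ind C D A → ind B D A)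
    (normal : ∀ A B C : Set α, ind A C B → ind (A ∪ C) C B)
    (exist : ∀ A B C : Set α,
      ∃ (A' : Set α) (g : G), (∀ x ∈ C, g • x = x) ∧ g • A = A' ∧ ind A' C B)
    (symm : ∀ A B C : Set α, ind A C B ↔ ind B C A) :
    ∀ A B C Bhat : Set α, ind A C B → B ⊆ Bhat →
      ∃ (A' : Set α) (g : G), (∀ x ∈ B ∪ C, g • x = x) ∧ g • A = A' ∧ ind A' C Bhat := by
  intro A B C Bhat hAB _
  obtain ⟨A', g, hfix, rfl, hBhat⟩ := exist A Bhat (B ∪ C)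
  have hB : ind (g • A) C B := ind_smul_of_forall_smul_eq ind inv hAB hfix
  exact ⟨g • A, g, hfix, rfl, ind_of_ind_of_ind_union ind mono trans normal symm hB hBhat⟩
end

section
/- Let L be a first-order language and M an L-structure. For any sets A, B ⊆ M there is a subset C ⊆ A of cardinality at most max(|L|, ℵ₀, |B|) such that for every L-formula φ(x̄; ȳ) (with free variables split into two finite blocks), every tuple b̄ of elements of B∪C and every tuple ā of elements of A with M ⊨ φ(ā; b̄), there is a tuple c̄ of elements of C with M ⊨ φ(c̄; b̄) (i.e., the type over B∪C of an enumeration of A is finitely satisfied in C). -/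
/-!
Expand the language by Skolem-type functions: for each formula `φ(x̄; ȳ)` and each coordinate `i`
of `x̄`, a function of `ȳ` returning the `i`-th entry of a fixed witness `ā ∈ Aⁿ` of `φ(x̄; ȳ)`,
whenever one exists. There are at most `max(|L|, ℵ₀)` such functions, so the closure of `B`
under them has size at most `max(|L|, ℵ₀, |B|)`, and `C := A ∩ closure(B)` works: the witness
chosen for parameters in `B ∪ C` lies in `A` and in the closure.
-/

universe u v w

open Cardinal Set

lemma Cardinal.mk_sigma_nat_le {f : ℕ → Type v} {κ : Cardinal.{v}} (hκ : ℵ₀ ≤ κ)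
    (h : ∀ n, #(f n) ≤ κ) : #(Σ n, f n) ≤ κ := by
  rw [mk_sigma]
  calc sum (fun n => #(f n)) ≤ sum (fun _ : ℕ => κ) := sum_le_sum _ _ h
    _ = κ := by rw [sum_const, mk_nat, lift_aleph0, lift_uzero, aleph0_mul_eq hκ]

namespace FirstOrder.Language

variable (L : Language.{u, v})

lemma mk_formula_le_of_finite (α : Type) [Finite α] : #(L.Formula α) ≤ max ℵ₀ L.card := by
  refine (mk_le_of_injective (sigma_mk_injective (i := 0))).trans
    (BoundedFormula.card_le.trans (max_le (le_max_left _ _) ?_))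
  refine (add_le_max _ _).trans (max_le (max_le ?_ (by simp)) (le_max_left _ _))
  exact (lift_lt_aleph0.2 mk_lt_aleph0).le.trans (le_max_left _ _)

def witnessLanguage : Language.{max u v, 0} :=
  ⟨fun m => Σ n, L.Formula (Fin n ⊕ Fin m) × Fin n, fun _ => PEmpty⟩

lemma mk_sigma_functions_witnessLanguage_le :
    #(Σ m, (witnessLanguage L).Functions m) ≤ max ℵ₀ L.card := by
  have hκ : ℵ₀ ≤ max ℵ₀ L.card := le_max_left _ _
  refine mk_sigma_nat_le hκ fun m => mk_sigma_nat_le hκ fun n => ?_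
  rw [mk_prod, lift_uzero, mk_fin, lift_natCast]
  calc #(L.Formula (Fin n ⊕ Fin m)) * n ≤ max ℵ₀ L.card * max ℵ₀ L.card :=
        mul_le_mul' (mk_formula_le_of_finite L _) (natCast_lt_aleph0.le.trans hκ)
    _ = max ℵ₀ L.card := mul_eq_self hκ

variable {L} {M : Type w} [L.Structure M]

open Classical in
noncomputable abbrev witnessStructure [Nonempty M] (A : Set M) :
    (witnessLanguage L).Structure M where
  funMap {_} f b :=
    if h : ∃ a : Fin f.1 → M, (∀ i, a i ∈ A) ∧ f.2.1.Realize (Sum.elim a b) then h.choose f.2.2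
    else Classical.arbitrary M
  RelMap r := r.elim

variable (L) in
noncomputable def witnessHull [Nonempty M] (A B : Set M) : Set M :=
  letI := witnessStructure (L := L) A
  A ∩ Substructure.closure (witnessLanguage L) B

variable [Nonempty M] (A B : Set M)

lemma witnessHull_subset : witnessHull L A B ⊆ A := inter_subset_left

lemma lift_mk_witnessHull_le :
    lift.{max u v} #(witnessHull L A B) ≤ max (max (lift.{w} L.card) ℵ₀) (lift.{max u v} #B) := by
  let := witnessStructure (L := L) A
  have hκ : ℵ₀ ≤ max (max (lift.{w} L.card) ℵ₀) (lift.{max u v} #B) :=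
    le_max_of_le_left (le_max_right _ _)
  have h_closure := Substructure.lift_card_closure_le (L := witnessLanguage L) (s := B)
  have h_functions := lift_le.{w}.2 (mk_sigma_functions_witnessLanguage_le L)
  rw [lift_max, lift_aleph0] at h_functions
  calc lift.{max u v} #(witnessHull L A B)
      ≤ lift.{max u v} #(Substructure.closure (witnessLanguage L) B) :=
        lift_le.2 (mk_le_mk_of_subset inter_subset_right)
    _ ≤ _ := h_closure
    _ ≤ _ := max_le hκ (add_le_of_le hκ (le_max_right _ _) (h_functions.trans (max_le hκ ?_)))
  exact le_max_of_le_left (le_max_left _ _)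

lemma exists_realize_mem_witnessHull {n m : ℕ} (φ : L.Formula (Fin n ⊕ Fin m)) {b : Fin m → M}
    (hb : ∀ i, b i ∈ B ∪ witnessHull L A B)
    (h : ∃ a : Fin n → M, (∀ i, a i ∈ A) ∧ φ.Realize (Sum.elim a b)) :
    ∃ c : Fin n → M, (∀ i, c i ∈ witnessHull L A B) ∧ φ.Realize (Sum.elim c b) := by
  let := witnessStructure (L := L) A
  have hb_closure : ∀ i, b i ∈ Substructure.closure (witnessLanguage L) B := fun i =>
    (hb i).elim (fun hB => Substructure.subset_closure hB) fun hC => hC.2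
  refine ⟨h.choose, fun i => ⟨h.choose_spec.1 i, ?_⟩, h.choose_spec.2⟩
  have h_funMap : Structure.funMap (L := witnessLanguage L) ⟨n, φ, i⟩ b = h.choose i := dif_pos h
  exact h_funMap ▸ Substructure.fun_mem _ _ b hb_closure

end FirstOrder.Language

open FirstOrder.Language

/-- Remark on finite satisfiability: for any sets `A, B ⊆ M` there is
`C ⊆ A` with `|C| ≤ max(|L|, ℵ₀, |B|)` such that the type over `B ∪ C` of an
enumeration of `A` is finitely satisfied in `C`. -/
theorem stmt_8 {L : FirstOrder.Language.{u, u}} {M : Type u} [L.Structure M]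
    (A B : Set M) :
    ∃ C : Set M, C ⊆ A ∧
      Cardinal.mk ↥C ≤ max (max L.card Cardinal.aleph0) (Cardinal.mk ↥B) ∧
      ∀ (n m : ℕ) (φ : L.Formula (Fin n ⊕ Fin m)) (b : Fin m → M),
        (∀ i, b i ∈ B ∪ C) →
        ∀ a : Fin n → M, (∀ i, a i ∈ A) → φ.Realize (Sum.elim a b) →
          ∃ c : Fin n → M, (∀ i, c i ∈ C) ∧ φ.Realize (Sum.elim c b) := by
  rcases isEmpty_or_nonempty M with _ | _
  · exact ⟨∅, empty_subset A, by simp, fun n m φ b _ a _ hφ => ⟨a, fun i => isEmptyElim (a i), hφ⟩⟩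
  refine ⟨witnessHull L A B, witnessHull_subset A B, ?_, fun n m φ b hb a ha hφ =>
    exists_realize_mem_witnessHull A B φ hb ⟨a, ha, hφ⟩⟩
  simpa using lift_mk_witnessHull_le (L := L) A B
end

section
/- Let L be a first-order language, M an L-structure, and ⫶ a ternary relation on subsets of M satisfying monotonicity and strong finite character. Suppose A, B, C ⊆ M are such that C ⫶_C B, and such that for every L-formula φ(x̄; ȳ), every tuple ē of elements of B∪C and every tuple ā of elements of A with M ⊨ φ(ā; ē), there is a tuple c̄ of elements of C with M ⊨ φ(c̄; ē). Then A ⫶_C B. -/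
/-!
If `¬ A ⫶_C B`, strong finite character yields a formula `φ(ā, b̄, c̄)` true of a tuple `ā` from
`A` all of whose solutions `ā'` satisfy `¬ range ā' ⫶_C range b̄`. Finite satisfiability of the
type of `A` over `B ∪ C` in `C` provides such a solution inside `C`, and monotonicity applied to
`C ⫶_C B` gives `range ā' ⫶_C range b̄`, a contradiction.
-/

universe u

theorem Fin.append_mem_union {M : Type*} {m k : ℕ} {B C : Set M} {b : Fin m → M}
    {c : Fin k → M} (hb : ∀ i, b i ∈ B) (hc : ∀ i, c i ∈ C) (i : Fin (m + k)) :
    Fin.append b c i ∈ B ∪ C :=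
  Fin.addCases (fun j ↦ by simp [hb j]) (fun j ↦ by simp [hc j]) i

namespace FirstOrder.Language

variable {L : Language.{u, u}} {M : Type u} [L.Structure M]

/-- The type of (enumerations of) `A` over `P` is finitely satisfiable in `C`. -/
def IsFinitelySatisfiableIn (A P C : Set M) : Prop :=
  ∀ (n m : ℕ) (φ : L.Formula (Fin n ⊕ Fin m)) (e : Fin m → M), (∀ i, e i ∈ P) →
    ∀ a : Fin n → M, (∀ i, a i ∈ A) → φ.Realize (Sum.elim a e) →
      ∃ c : Fin n → M, (∀ i, c i ∈ C) ∧ φ.Realize (Sum.elim c e)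

theorem Formula.realize_relabel_sumMap_finSumFinEquiv {α : Type*} {m k : ℕ}
    (φ : L.Formula (α ⊕ Fin m ⊕ Fin k)) (a : α → M) (b : Fin m → M) (c : Fin k → M) :
    (φ.relabel (Sum.map id finSumFinEquiv)).Realize (Sum.elim a (Fin.append b c)) ↔
      φ.Realize (Sum.elim a (Sum.elim b c)) := by
  rw [Formula.realize_relabel]
  congr!
  ext (i | i | i) <;> simp

theorem IsFinitelySatisfiableIn.exists_realize_sumElim {A B C : Set M}
    (hfs : IsFinitelySatisfiableIn (L := L) A (B ∪ C) C) {n m k : ℕ}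
    (φ : L.Formula (Fin n ⊕ Fin m ⊕ Fin k)) {a : Fin n → M} {b : Fin m → M} {c : Fin k → M}
    (ha : ∀ i, a i ∈ A) (hb : ∀ i, b i ∈ B) (hc : ∀ i, c i ∈ C)
    (hφ : φ.Realize (Sum.elim a (Sum.elim b c))) :
    ∃ a' : Fin n → M, (∀ i, a' i ∈ C) ∧ φ.Realize (Sum.elim a' (Sum.elim b c)) := by
  simp only [← Formula.realize_relabel_sumMap_finSumFinEquiv] at hφ ⊢
  exact hfs n (m + k) _ _ (Fin.append_mem_union hb hc) a ha hφ

end FirstOrder.Language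

/-- Remark 2.1.3: if `⫶` satisfies monotonicity and strong finite character,
`C ⫶_C B` holds, and the type of (an enumeration of) `A` over `B∪C` is finitely
satisfied in `C`, then `A ⫶_C B`. -/
theorem stmt_9 {L : FirstOrder.Language.{u, u}} {M : Type u} [L.Structure M]
    (ind : Set M → Set M → Set M → Prop)
    (mono : ∀ A B C A' B' : Set M, ind A C B → A' ⊆ A → B' ⊆ B → ind A' C B')
    (sfc : ∀ A B C : Set M, ¬ ind A C B →
      ∃ (n m k : ℕ) (a : Fin n → M) (b : Fin m → M) (cc : Fin k → M)
        (φ : L.Formula (Fin n ⊕ Fin m ⊕ Fin k)),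
        (∀ i, a i ∈ A) ∧ (∀ i, b i ∈ B) ∧ (∀ i, cc i ∈ C) ∧
        φ.Realize (Sum.elim a (Sum.elim b cc)) ∧
        ∀ a' : Fin n → M, φ.Realize (Sum.elim a' (Sum.elim b cc)) →
          ¬ ind (Set.range a') C (Set.range b))
    (A B C : Set M)
    (hCB : ind C C B)
    (hfs : ∀ (n m : ℕ) (φ : L.Formula (Fin n ⊕ Fin m)) (e : Fin m → M),
      (∀ i, e i ∈ B ∪ C) →
      ∀ a : Fin n → M, (∀ i, a i ∈ A) → φ.Realize (Sum.elim a e) →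
        ∃ c : Fin n → M, (∀ i, c i ∈ C) ∧ φ.Realize (Sum.elim c e)) :
    ind A C B := by
  by_contra h
  obtain ⟨n, m, k, a, b, cc, φ, ha, hb, hc, hφ, hdep⟩ := sfc A B C h
  obtain ⟨c, hcC, hcφ⟩ :=
    FirstOrder.Language.IsFinitelySatisfiableIn.exists_realize_sumElim hfs φ ha hb hc hφ
  exact hdep c hcφ (mono C B C _ _ hCB (Set.range_subset_iff.2 hcC) (Set.range_subset_iff.2 hb))
end

section
/- Let L be a first-order language and M an L-structure. If (āᵢ)_{i∈I} and (b̄ⱼ)_{j∈J} are cleanly collinear indiscernible sequences of κ-tuples in M, then ker((āᵢ)_{i∈I}) = dcl(E_a) ∩ dcl(E_b), where E_a and E_b are the sets of all coordinates of the tuples of the two sequences; consequently ker((āᵢ)_{i∈I}) = ker((b̄ⱼ)_{j∈J}). -/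
open FirstOrder

universe u

/-- A sequence `(āᵢ)_{i∈I}` of `κ`-tuples in `M` is indiscernible over `B`:
any two strictly increasing `n`-tuples of indices give, after the same finite selection of
coordinates and with any parameters from `B`, the same satisfied formulas. -/
def IndiscernibleOver (L : FirstOrder.Language.{u, u}) {M : Type u} [L.Structure M]
    {I : Type*} [LinearOrder I] {κ : Type*} (a : I → κ → M) (B : Set M) : Prop :=
  ∀ (n : ℕ) (i i' : Fin n → I), StrictMono i → StrictMono i' →
    ∀ (s : ℕ) (sel : Fin s → Fin n × κ) (t : ℕ) (par : Fin t → M), (∀ j, par j ∈ B) →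
      ∀ φ : L.Formula (Fin s ⊕ Fin t),
        (φ.Realize (Sum.elim (fun j => a (i (sel j).1) (sel j).2) par) ↔
          φ.Realize (Sum.elim (fun j => a (i' (sel j).1) (sel j).2) par))

/-- Two sequences of `κ`-tuples are cleanly collinear if their concatenation, indexed by
the ordered sum `I ⊕ₗ J`, is indiscernible over `∅`. -/
def CleanlyCollinear (L : FirstOrder.Language.{u, u}) {M : Type u} [L.Structure M]
    {I J : Type*} [LinearOrder I] [LinearOrder J] {κ : Type*}
    (a : I → κ → M) (b : J → κ → M) : Prop :=
  IndiscernibleOver L (fun (x : I ⊕ₗ J) => Sum.elim a b (ofLex x)) (∅ : Set M)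

/-- The definable closure of `A` in `M`. -/
def dclSet (L : FirstOrder.Language.{u, u}) {M : Type u} [L.Structure M]
    (A : Set M) : Set M :=
  {d | ∃ (t : ℕ) (e : Fin t → M), (∀ i, e i ∈ A) ∧
    ∃ φ : L.Formula (Unit ⊕ Fin t),
      φ.Realize (Sum.elim (fun _ => d) e) ∧
      ∀ d' : M, φ.Realize (Sum.elim (fun _ => d') e) → d' = d}

/-- The set of all coordinates of all tuples of a sequence. -/
def seqCoords {M : Type u} {I κ : Type*} (a : I → κ → M) : Set M :=
  {x | ∃ i k, a i k = x}

/-- The kernel of a sequence of `κ`-tuples: the elements of the definable closure of its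
coordinates over which the sequence is indiscernible. -/
def kernelSet (L : FirstOrder.Language.{u, u}) {M : Type u} [L.Structure M]
    {I : Type*} [LinearOrder I] {κ : Type*} (a : I → κ → M) : Set M :=
  {d | d ∈ dclSet L (seqCoords a) ∧ IndiscernibleOver L a ({d} : Set M)}

/-!
If `d ∈ dcl(E_b)` is defined by `φ(y, b̄)`, a formula `ψ(x̄, d)` about the `āᵢ` is equivalent to
`∃ y, φ(y, b̄) ∧ ψ(x̄, y)`; as all indices of `I` lie below those of `J`, indiscernibility of
the concatenation makes `(āᵢ)` indiscernible over `d`. Conversely, if `(āᵢ)` is indiscernible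
over an element `d` defined by `φ(y, ā_{i₀})`, then `φ(y, ā_u)` defines `d` for every
increasing `u`. For two consecutive blocks `u₁ < u₂`, "`φ(y, x̄)` and `φ(y, z̄)` have the same
solutions" holds of `(ā_{u₁}, ā_{u₂})`, hence of `(ā_{u₁}, b̄_j)`, so `φ(y, b̄_j)` defines `d`
too. Reversing both orders makes `((b̄ⱼ), (āᵢ))` cleanly collinear, which gives the same
description of `ker((b̄ⱼ))`.
-/

open FirstOrder.Language

theorem Sum.Lex.strictMono_map {α β γ δ : Type*} [Preorder α] [Preorder β] [Preorder γ]
    [Preorder δ] {f : α → γ} {g : β → δ} (hf : StrictMono f) (hg : StrictMono g) :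
    StrictMono fun x : α ⊕ₗ β => toLex (Sum.map f g (ofLex x)) := by
  rintro (x | x) (y | y) h
  · exact Sum.Lex.inl_lt_inl_iff.2 (hf (Sum.Lex.inl_lt_inl_iff.1 h))
  · exact Sum.Lex.inl_lt_inr _ _
  · exact absurd h Sum.Lex.not_inr_lt_inl
  · exact Sum.Lex.inr_lt_inr_iff.2 (hg (Sum.Lex.inr_lt_inr_iff.1 h))

section

variable {L : FirstOrder.Language.{u, u}} {M : Type u} [L.Structure M]

namespace IndiscernibleOver

variable {I : Type*} [LinearOrder I] {κ : Type*} {a : I → κ → M} {B : Set M}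

theorem realize_sumElim_iff (ha : IndiscernibleOver L a B) {ι : Type*} [LinearOrder ι]
    [Finite ι] {i i' : ι → I} (hi : StrictMono i) (hi' : StrictMono i') {α β : Type*}
    [Finite α] [Finite β] (p : α → ι × κ) (par : β → M) (hpar : ∀ k, par k ∈ B)
    (φ : L.Formula (α ⊕ β)) :
    φ.Realize (Sum.elim (fun x => a (i (p x).1) (p x).2) par) ↔
      φ.Realize (Sum.elim (fun x => a (i' (p x).1) (p x).2) par) := by
  have := Fintype.ofFinite ι
  let e := Fintype.orderIsoFinOfCardEq ι rfl
  obtain ⟨s, ⟨eα⟩⟩ := Finite.exists_equiv_fin α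
  obtain ⟨t, ⟨eβ⟩⟩ := Finite.exists_equiv_fin β
  have key := ha _ (i ∘ e) (i' ∘ e) (hi.comp e.strictMono) (hi'.comp e.strictMono) s
    (fun k => (e.symm (p (eα.symm k)).1, (p (eα.symm k)).2)) t (par ∘ eβ.symm)
    (fun _ => hpar _) (φ.relabel (Sum.map eα eβ))
  rw [Formula.realize_relabel, Formula.realize_relabel, Sum.elim_comp_map, Sum.elim_comp_map]
    at key
  simpa [Function.comp_def] using key

theorem realize_iff (ha : IndiscernibleOver L a B) {ι : Type*} [LinearOrder ι]
    [Finite ι] {i i' : ι → I} (hi : StrictMono i) (hi' : StrictMono i') {α : Type*}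
    [Finite α] (p : α → ι × κ) (φ : L.Formula α) :
    φ.Realize (fun x => a (i (p x).1) (p x).2) ↔
      φ.Realize (fun x => a (i' (p x).1) (p x).2) := by
  simpa [Formula.realize_relabel, Function.comp_def] using
    ha.realize_sumElim_iff hi hi' p (Empty.elim : Empty → M) nofun (φ.relabel Sum.inl)

theorem comp_strictMono (ha : IndiscernibleOver L a B) {K : Type*} [LinearOrder K]
    {f : K → I} (hf : StrictMono f) : IndiscernibleOver L (fun k => a (f k)) B :=
  fun n i i' hi hi' => ha n (f ∘ i) (f ∘ i') (hf.comp hi) (hf.comp hi')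

theorem orderDual (ha : IndiscernibleOver L a B) :
    IndiscernibleOver L (fun i : Iᵒᵈ => a (OrderDual.ofDual i)) B :=
  fun n _ _ hi hi' _ sel _ par hpar φ =>
    ha.realize_sumElim_iff (ι := (Fin n)ᵒᵈ) (fun _ _ h => hi h) (fun _ _ h => hi' h)
      (fun m => (OrderDual.toDual (sel m).1, (sel m).2)) par hpar φ

end IndiscernibleOver

theorem indiscernibleOver_orderDual_iff {I κ : Type*} [LinearOrder I] {a : I → κ → M}
    {B : Set M} :
    IndiscernibleOver L (fun i : Iᵒᵈ => a (OrderDual.ofDual i)) B ↔ IndiscernibleOver L a B :=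
  ⟨IndiscernibleOver.orderDual, IndiscernibleOver.orderDual⟩

section Definability

variable {α β γ : Type*}

def Defines (φ : L.Formula (Unit ⊕ α)) (e : α → M) (d : M) : Prop :=
  ∀ y, φ.Realize (Sum.elim (fun _ => y) e) ↔ y = d

theorem mem_dclSet_iff {A : Set M} {d : M} :
    d ∈ dclSet L A ↔ ∃ (t : ℕ) (e : Fin t → M), (∀ i, e i ∈ A) ∧
      ∃ φ : L.Formula (Unit ⊕ Fin t), Defines φ e d := by
  refine exists_congr fun t => exists_congr fun e => and_congr_right fun _ =>
    exists_congr fun φ => ?_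
  exact ⟨fun h y => ⟨h.2 y, fun hy => hy ▸ h.1⟩, fun h => ⟨(h d).2 rfl, fun y => (h y).1⟩⟩

theorem mem_dclSet_seqCoords_iff {I κ : Type*} {a : I → κ → M} {d : M} :
    d ∈ dclSet L (seqCoords a) ↔ ∃ (t : ℕ) (p : Fin t → I × κ) (φ : L.Formula (Unit ⊕ Fin t)),
      Defines φ (fun m => a (p m).1 (p m).2) d := by
  rw [mem_dclSet_iff]
  constructor
  · rintro ⟨t, e, he, φ, hφ⟩
    choose i k hik using he
    refine ⟨t, fun m => (i m, k m), φ, ?_⟩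
    simpa only [hik] using hφ
  · rintro ⟨t, p, φ, hφ⟩
    exact ⟨t, _, fun m => ⟨_, _, rfl⟩, φ, hφ⟩

noncomputable def sameSolutions (φ ψ : L.Formula (Unit ⊕ α)) : L.Formula α :=
  Formula.iAlls Unit ((φ.iff ψ).relabel Sum.swap)

theorem realize_sameSolutions (φ ψ : L.Formula (Unit ⊕ α)) (v : α → M) :
    (sameSolutions φ ψ).Realize v ↔ ∀ y,
      (φ.Realize (Sum.elim (fun _ => y) v) ↔ ψ.Realize (Sum.elim (fun _ => y) v)) := by
  simp only [sameSolutions, Formula.realize_iAlls, Formula.realize_relabel, Formula.realize_iff,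
    Sum.elim_swap]
  exact ⟨fun h y => h _, fun h i => h (i ())⟩

noncomputable def sameSolutionsAt (φ : L.Formula (Unit ⊕ α)) : L.Formula (α ⊕ α) :=
  sameSolutions (φ.relabel (Sum.map id Sum.inl)) (φ.relabel (Sum.map id Sum.inr))

theorem realize_sameSolutionsAt (φ : L.Formula (Unit ⊕ α)) (v w : α → M) :
    (sameSolutionsAt φ).Realize (Sum.elim v w) ↔ ∀ y,
      (φ.Realize (Sum.elim (fun _ => y) v) ↔ φ.Realize (Sum.elim (fun _ => y) w)) := by
  simp only [sameSolutionsAt, realize_sameSolutions, Formula.realize_relabel, Sum.elim_comp_map,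
    Function.comp_id, Sum.elim_comp_inl, Sum.elim_comp_inr]

noncomputable def definesFormula (φ : L.Formula (Unit ⊕ α)) : L.Formula (α ⊕ Unit) :=
  sameSolutions (φ.relabel (Sum.map id Sum.inl))
    ((Term.var (Sum.inl ())).equal (Term.var (Sum.inr (Sum.inr ()))))

theorem realize_definesFormula (φ : L.Formula (Unit ⊕ α)) (e : α → M) (d : M) :
    (definesFormula φ).Realize (Sum.elim e fun _ => d) ↔ Defines φ e d := by
  simp [definesFormula, realize_sameSolutions, Formula.realize_relabel, Sum.elim_comp_map, Defines]

noncomputable def substDefined (ψ : L.Formula (α ⊕ β)) (φ : L.Formula (Unit ⊕ γ)) :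
    L.Formula (α ⊕ γ) :=
  Formula.iExs Unit (φ.relabel (Sum.elim (fun _ => Sum.inr ()) (Sum.inl ∘ Sum.inr)) ⊓
    ψ.relabel (Sum.elim (Sum.inl ∘ Sum.inl) fun _ => Sum.inr ()))

theorem realize_substDefined {ψ : L.Formula (α ⊕ β)} {φ : L.Formula (Unit ⊕ γ)} {e : γ → M}
    {d : M} (hφ : Defines φ e d) (v : α → M) :
    (substDefined ψ φ).Realize (Sum.elim v e) ↔ ψ.Realize (Sum.elim v fun _ => d) := by
  simp only [substDefined, Formula.realize_iExs, Formula.realize_inf, Formula.realize_relabel,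
    Sum.comp_elim, ← Function.comp_assoc, Sum.elim_comp_inl, Sum.elim_comp_inr]
  constructor
  · rintro ⟨y, hy, hψ⟩
    obtain rfl : y () = d := (hφ (y ())).1 hy
    exact hψ
  · exact fun hψ => ⟨fun _ => d, (hφ d).2 rfl, hψ⟩

end Definability

theorem IndiscernibleOver.singleton_of_mem_dclSet {I κ : Type*} [LinearOrder I]
    {a : I → κ → M} {B : Set M} (ha : IndiscernibleOver L a B) {d : M}
    (hd : d ∈ dclSet L B) : IndiscernibleOver L a {d} := by
  obtain ⟨t, e, he, φ, hφ⟩ := mem_dclSet_iff.1 hd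
  intro n i i' hi hi' s sel _ par hpar ψ
  obtain rfl : par = fun _ => d := funext hpar
  simpa only [realize_substDefined hφ] using ha n i i' hi hi' s sel t e he (substDefined ψ φ)

namespace CleanlyCollinear

variable {I J κ : Type*} [LinearOrder I] [LinearOrder J] {a : I → κ → M} {b : J → κ → M}

open Sum OrderDual

theorem indiscernibleOver_seqCoords (hcc : CleanlyCollinear L a b) :
    IndiscernibleOver L a (seqCoords b) := by
  intro n i i' hi hi' s sel t par hpar ψ
  choose j k hjk using hpar
  let q : Fin s ⊕ Fin t → (Fin n ⊕ₗ Set.range j) × κ :=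
    Sum.elim (fun m => (toLex (inl (sel m).1), (sel m).2))
      (fun m => (toLex (inr ⟨j m, m, rfl⟩), k m))
  have hv : ∀ f : Fin n → I,
      (fun x => Sum.elim a b (ofLex (toLex (Sum.map f Subtype.val (ofLex (q x).1)))) (q x).2) =
        Sum.elim (fun m => a (f (sel m).1) (sel m).2) par := by
    intro f
    funext x
    rcases x with m | m
    · rfl
    · exact hjk m
  simpa only [hv] using IndiscernibleOver.realize_iff hcc
    (Lex.strictMono_map hi (Subtype.strictMono_coe _))
    (Lex.strictMono_map hi' (Subtype.strictMono_coe _)) q ψ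

theorem orderDual_swap (hcc : CleanlyCollinear L a b) :
    CleanlyCollinear L (fun j : Jᵒᵈ => b (ofDual j)) (fun i : Iᵒᵈ => a (ofDual i)) := by
  have := (IndiscernibleOver.orderDual hcc).comp_strictMono
    (OrderIso.sumLexDualAntidistrib I J).symm.strictMono
  unfold CleanlyCollinear
  convert this using 2 with x
  rcases x with j | i <;> rfl

theorem kernelSet_subset_dclSet_right [Infinite I] [Infinite J]
    (hcc : CleanlyCollinear L a b) : kernelSet L a ⊆ dclSet L (seqCoords b) := by
  rintro d ⟨hd, had⟩
  obtain ⟨t, p, φ, hφ⟩ := mem_dclSet_seqCoords_iff.1 hd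
  let ι := Set.range fun m => (p m).1
  let q : Fin t → ι × κ := fun m => (⟨(p m).1, m, rfl⟩, (p m).2)
  have hdefines : ∀ u : ι → I, StrictMono u →
      Defines φ (fun m => a (u (q m).1) (q m).2) d := by
    intro u hu
    have key := had.realize_sumElim_iff (Subtype.strictMono_coe _) hu q (fun _ : Unit => d)
      (fun _ => rfl) (definesFormula φ)
    rw [realize_definesFormula, realize_definesFormula] at key
    exact key.1 hφ
  obtain ⟨w⟩ := nonempty_orderEmbedding_of_finite_infinite (ι ⊕ₗ ι) I
  obtain ⟨j⟩ := nonempty_orderEmbedding_of_finite_infinite ι J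
  let u₁ : ι → I := fun x => w (toLex (inl x))
  let u₂ : ι → I := fun x => w (toLex (inr x))
  have hu₁ : StrictMono u₁ := w.strictMono.comp Lex.inl_strictMono
  have hu₂ : StrictMono u₂ := w.strictMono.comp Lex.inr_strictMono
  let r : Fin t ⊕ Fin t → (ι ⊕ₗ ι) × κ :=
    Sum.elim (fun m => (toLex (inl (q m).1), (q m).2)) (fun m => (toLex (inr (q m).1), (q m).2))
  have hsame : (∀ y, φ.Realize (Sum.elim (fun _ => y) fun m => a (u₁ (q m).1) (q m).2) ↔
        φ.Realize (Sum.elim (fun _ => y) fun m => a (u₂ (q m).1) (q m).2)) →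
      ∀ y, φ.Realize (Sum.elim (fun _ => y) fun m => a (u₁ (q m).1) (q m).2) ↔
        φ.Realize (Sum.elim (fun _ => y) fun m => b (j (q m).1) (q m).2) := by
    rw [← realize_sameSolutionsAt, ← realize_sameSolutionsAt]
    convert (IndiscernibleOver.realize_iff hcc (Lex.inl_strictMono.comp w.strictMono)
      (Lex.strictMono_map hu₁ j.strictMono) r (sameSolutionsAt φ)).1 using 2 <;>
      funext x <;> rcases x with m | m <;> rfl
  have hb : Defines φ (fun m => b (j (q m).1) (q m).2) d := fun y =>
    (hsame (fun y => (hdefines u₁ hu₁ y).trans (hdefines u₂ hu₂ y).symm) y).symm.trans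
      (hdefines u₁ hu₁ y)
  exact mem_dclSet_seqCoords_iff.2 ⟨t, fun m => (j (q m).1, (q m).2), φ, hb⟩

end CleanlyCollinear

theorem kernelSet_orderDual {I κ : Type*} [LinearOrder I] (a : I → κ → M) :
    kernelSet L (fun i : Iᵒᵈ => a (OrderDual.ofDual i)) = kernelSet L a := by
  ext d
  exact and_congr Iff.rfl indiscernibleOver_orderDual_iff

theorem CleanlyCollinear.kernelSet_eq_inter {I J κ : Type*} [LinearOrder I] [LinearOrder J]
    [Infinite I] [Infinite J] {a : I → κ → M} {b : J → κ → M} (hcc : CleanlyCollinear L a b) :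
    kernelSet L a = dclSet L (seqCoords a) ∩ dclSet L (seqCoords b) := by
  ext d
  exact ⟨fun hd => ⟨hd.1, hcc.kernelSet_subset_dclSet_right hd⟩,
    fun ⟨hda, hdb⟩ => ⟨hda, hcc.indiscernibleOver_seqCoords.singleton_of_mem_dclSet hdb⟩⟩

end

theorem stmt_12_general {L : FirstOrder.Language.{u, u}} {M : Type u} [L.Structure M]
    {I J : Type*} [LinearOrder I] [LinearOrder J] [Infinite I] [Infinite J]
    {κ : Type*} (a : I → κ → M) (b : J → κ → M)
    (hcc : CleanlyCollinear L a b) :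
    kernelSet L a = dclSet L (seqCoords a) ∩ dclSet L (seqCoords b) ∧
    kernelSet L a = kernelSet L b := by
  have hab := hcc.kernelSet_eq_inter
  have : Infinite Iᵒᵈ := ‹Infinite I›
  have : Infinite Jᵒᵈ := ‹Infinite J›
  have hba := hcc.orderDual_swap.kernelSet_eq_inter
  refine ⟨hab, ?_⟩
  rw [hab, ← kernelSet_orderDual b, hba, Set.inter_comm]
  rfl

/-- Theorem on kernels: if `(āᵢ)_{i∈I}` and `(b̄ⱼ)_{j∈J}` are cleanly
collinear indiscernible sequences, then `ker((āᵢ)) = dcl(E_a) ∩ dcl(E_b)`, where `E_a`,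
`E_b` are the sets of coordinates of the two sequences; consequently
`ker((āᵢ)) = ker((b̄ⱼ))`. -/
theorem stmt_12 {L : FirstOrder.Language.{u, u}} {M : Type u} [L.Structure M]
    {I J : Type*} [LinearOrder I] [LinearOrder J] [Infinite I] [Infinite J]
    {κ : Type*} (a : I → κ → M) (b : J → κ → M)
    (ha : IndiscernibleOver L a (∅ : Set M))
    (hb : IndiscernibleOver L b (∅ : Set M))
    (hcc : CleanlyCollinear L a b) :
    kernelSet L a = dclSet L (seqCoords a) ∩ dclSet L (seqCoords b) ∧
    kernelSet L a = kernelSet L b :=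
  stmt_12_general a b hcc
end

section
/- Let c be a closure operator on subsets of a type α and define A ⫶a_C B iff c(A∪C) ∩ c(B∪C) = c(C). Then ⫶a satisfies base monotonicity if and only if the lattice of closed sets is modular, i.e., for all closed sets A, B, C with C ⊆ B one has B ∩ c(A∪C) = c((B∩A)∪C). -/
/-- The relation `⫶a`: `A ⫶a_C B` iff `c(A∪C) ∩ c(B∪C) = c(C)`. -/
def aInd {α : Type*} (c : Set α → Set α) (A C B : Set α) : Prop :=
  c (A ∪ C) ∩ c (B ∪ C) = c C

/-!
Closed sets `A`, `B` are always `⫶a`-independent over `A ∩ B`. Given base monotonicity, move the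
base up to `E = c((B ∩ A) ∪ C)`: then `B ∩ c(A ∪ C)` lies in `c(A ∪ E) ∩ c(B ∪ E) = c E = E`.
Conversely, for `D ⊆ C ⊆ B` with `A ⫶a_D B`, the modular law for the closed sets
`c(A ∪ D)`, `c C ⊆ c B` computes `c B ∩ c(A ∪ C)` as `c((c B ∩ c(A ∪ D)) ∪ C) = c(D ∪ C) = c C`.
-/
open Set

namespace ClosureOperator

variable {α : Type*} (c : ClosureOperator (Set α))

def IsBaseMonotone : Prop :=
  ∀ A B C D : Set α, D ⊆ C → C ⊆ B → aInd c A D B → aInd c A C B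

def IsModularOnClosed : Prop :=
  ∀ A B C : Set α, c A = A → c B = B → c C = C → C ⊆ B →
    B ∩ c (A ∪ C) = c ((B ∩ A) ∪ C)

variable {c}

theorem aInd_inter_of_closure_eq {A B : Set α} (hA : c A = A) (hB : c B = B) :
    aInd c A (A ∩ B) B := by
  have hAB : c (A ∩ B) = A ∩ B :=
    ((c.closure_inf_le A B).trans (by rw [hA, hB]; exact le_rfl)).antisymm (c.le_closure _)
  rw [aInd, union_eq_left.2 inter_subset_left, union_eq_left.2 inter_subset_right, hA, hB, hAB]

theorem isModularOnClosed_of_isBaseMonotone (h : c.IsBaseMonotone) : c.IsModularOnClosed := by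
  intro A B C hA hB _ hCB
  set E := c ((B ∩ A) ∪ C)
  have hEB : E ⊆ B := (c.monotone (union_subset inter_subset_left hCB)).trans hB.subset
  have hAE : A ∩ B ⊆ E := fun x hx => c.le_closure _ (Or.inl ⟨hx.2, hx.1⟩)
  have hind : aInd c A E B := h A B E (A ∩ B) hAE hEB (aInd_inter_of_closure_eq hA hB)
  refine Subset.antisymm ?_
    (subset_inter hEB (c.monotone (union_subset_union_left C inter_subset_right)))
  calc B ∩ c (A ∪ C)
      ⊆ c (B ∪ E) ∩ c (A ∪ E) :=
        inter_subset_inter (subset_union_left.trans (c.le_closure _))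
          (c.monotone (union_subset_union_right A (subset_union_right.trans (c.le_closure _))))
    _ = c E := (inter_comm _ _).trans hind
    _ = E := c.idempotent _

theorem isBaseMonotone_of_isModularOnClosed (h : c.IsModularOnClosed) : c.IsBaseMonotone := by
  intro A B C D hDC hCB hD
  rw [aInd, union_eq_left.2 (hDC.trans hCB)] at hD
  have hmod := h (c (A ∪ D)) (c B) (c C) (c.idempotent _) (c.idempotent _) (c.idempotent _)
    (c.monotone hCB)
  have hAC : c (c (A ∪ D) ∪ c C) = c (A ∪ C) := by
    rw [show c (c (A ∪ D) ∪ c C) = c (A ∪ D ∪ C) from c.closure_sup_closure _ _,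
      union_assoc, union_eq_right.2 hDC]
  have hC : c (c D ∪ c C) = c C := by
    rw [show c (c D ∪ c C) = c (D ∪ C) from c.closure_sup_closure _ _, union_eq_right.2 hDC]
  rw [hAC, inter_comm (c B) (c (A ∪ D)), hD, hC] at hmod
  rw [aInd, union_eq_left.2 hCB, inter_comm, hmod]

end ClosureOperator

/-- Exercise on modularity: `⫶a` satisfies base monotonicity iff
the lattice of closed sets is modular. -/
theorem stmt_13 {α : Type*} (c : Set α → Set α)
    (cmono : ∀ A B : Set α, A ⊆ B → c A ⊆ c B)
    (cext : ∀ A : Set α, A ⊆ c A)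
    (cidem : ∀ A : Set α, c (c A) = c A) :
    (∀ A B C D : Set α, D ⊆ C → C ⊆ B → aInd c A D B → aInd c A C B) ↔
    (∀ A B C : Set α, c A = A → c B = B → c C = C → C ⊆ B →
      B ∩ c (A ∪ C) = c ((B ∩ A) ∪ C)) :=
  let cl := ClosureOperator.mk' c (fun A B => cmono A B) cext fun A => (cidem A).le
  ⟨cl.isModularOnClosed_of_isBaseMonotone, cl.isBaseMonotone_of_isModularOnClosed⟩
end

section
/- Let c be a closure operator on subsets of a type α and define A ⫶a_C B iff c(A∪C) ∩ c(B∪C) = c(C). Then ⫶a is perfectly trivial, i.e., A ⫶a_C B implies A ⫶a_{C'} B for every C' ⊇ C, if and only if the lattice of closed sets is distributive, i.e., for all closed sets A, B, C one has c(A∪C) ∩ c(B∪C) = c((A∩B)∪C). -/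
namespace ClosureOperator

variable {L : Type*}

theorem IsClosed.inf [SemilatticeInf L] {c : ClosureOperator L} {x y : L}
    (hx : c.IsClosed x) (hy : c.IsClosed y) : c.IsClosed (x ⊓ y) :=
  c.isClosed_iff_closure_le.2 <|
    (c.closure_inf_le x y).trans_eq (by rw [hx.closure_eq, hy.closure_eq])

end ClosureOperator

section aInd

variable {α : Type*} (c : ClosureOperator (Set α))

theorem aInd_inter_of_isClosed {A B : Set α} (hA : c.IsClosed A) (hB : c.IsClosed B) :
    aInd c A (A ∩ B) B := by
  have hAB : c (A ∩ B) = A ∩ B := (hA.inf hB).closure_eq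
  rw [aInd, Set.union_eq_left.2 Set.inter_subset_left,
    Set.union_eq_left.2 Set.inter_subset_right, hA.closure_eq, hB.closure_eq, hAB]

/-- Perfect triviality, applied to the base `A ∩ B` enlarged to `A ∩ B ∪ C`, gives distributivity. -/
theorem closure_union_inter_closure_union_of_aInd_mono
    (hmono : ∀ A B C C' : Set α, aInd c A C B → C ⊆ C' → aInd c A C' B)
    {A B : Set α} (hA : c.IsClosed A) (hB : c.IsClosed B) (C : Set α) :
    c (A ∪ C) ∩ c (B ∪ C) = c (A ∩ B ∪ C) := by
  have h := hmono A B _ _ (aInd_inter_of_isClosed c hA hB) (Set.subset_union_left (t := C))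
  rwa [aInd, ← Set.union_assoc, ← Set.union_assoc, Set.union_eq_left.2 Set.inter_subset_left,
    Set.union_eq_left.2 Set.inter_subset_right] at h

/-- Enlarging `C` to `C'` amounts to joining the closed sets `c (A ∪ C)`, `c (B ∪ C)` with
`c C'`; distributivity then turns their meet `c C` into `c (C ∪ C') = c C'`. -/
theorem aInd_mono_of_distrib
    (hdistrib : ∀ A B C : Set α, c.IsClosed A → c.IsClosed B → c.IsClosed C →
      c (A ∪ C) ∩ c (B ∪ C) = c (A ∩ B ∪ C))
    {A B C C' : Set α} (hind : aInd c A C B) (hCC' : C ⊆ C') : aInd c A C' B := by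
  have closure_union_closure : ∀ X Y : Set α, c (c X ∪ c Y) = c (X ∪ Y) :=
    c.closure_sup_closure
  have hjoin : ∀ X : Set α, c (X ∪ C') = c (c (X ∪ C) ∪ c C') := fun X => by
    rw [closure_union_closure, Set.union_assoc, Set.union_eq_right.2 hCC']
  have key := hdistrib _ _ _ (c.isClosed_closure (A ∪ C)) (c.isClosed_closure (B ∪ C))
    (c.isClosed_closure C')
  rwa [hind, ← hjoin, ← hjoin, closure_union_closure, Set.union_eq_right.2 hCC'] at key

end aInd

/-- Exercise on distributivity: `⫶a` is perfectly trivial iff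
the lattice of closed sets is distributive. -/
theorem stmt_14 {α : Type*} (c : Set α → Set α)
    (cmono : ∀ A B : Set α, A ⊆ B → c A ⊆ c B)
    (cext : ∀ A : Set α, A ⊆ c A)
    (cidem : ∀ A : Set α, c (c A) = c A) :
    (∀ A B C C' : Set α, aInd c A C B → C ⊆ C' → aInd c A C' B) ↔
    (∀ A B C : Set α, c A = A → c B = B → c C = C →
      c (A ∪ C) ∩ c (B ∪ C) = c ((A ∩ B) ∪ C)) := by
  let cl : ClosureOperator (Set α) := .mk' c cmono cext fun A => (cidem A).le
  have hclosed : ∀ A, cl.IsClosed A ↔ c A = A := fun A => cl.isClosed_iff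
  constructor
  · intro hmono A B C hA hB _
    exact closure_union_inter_closure_union_of_aInd_mono cl hmono
      ((hclosed A).2 hA) ((hclosed B).2 hB) C
  · intro hdistrib A B C C' hind hCC'
    exact aInd_mono_of_distrib cl
      (fun A B C hA hB hC => hdistrib A B C ((hclosed A).1 hA) ((hclosed B).1 hB)
        ((hclosed C).1 hC)) hind hCC'
end

section
/- Let c be a closure operator on subsets of a type α and define M-dividing independence by A ⫶M_C B iff for every C' with C ⊆ C' ⊆ c(B∪C) one has c(A∪C') ∩ c(B∪C') = c(C'). Then for all closed sets A and B: (A, B) is a modular pair, i.e., for every closed C ⊆ B one has c(A∪C) ∩ B = c(C ∪ (A∩B)), if and only if A ⫶M_{A∩B} B. -/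
namespace ClosureOperator

variable {α : Type*} (c : ClosureOperator (Set α))

def IsModularPair (A B : Set α) : Prop :=
  ∀ C, c.IsClosed C → C ⊆ B → c (A ∪ C) ∩ B = c (C ∪ (A ∩ B))

variable {c} {A B : Set α}

theorem mDiv_inter_iff (hB : c.IsClosed B) :
    mDiv c A (A ∩ B) B ↔ ∀ C, A ∩ B ⊆ C → C ⊆ B → c (A ∪ C) ∩ B = c C := by
  have hBAB : B ∪ A ∩ B = B := Set.union_eq_self_of_subset_right Set.inter_subset_right
  refine forall_congr' fun C ↦ imp_congr_right fun _ ↦ ?_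
  rw [hBAB, hB.closure_eq]
  exact imp_congr_right fun hCB ↦ by rw [Set.union_eq_self_of_subset_right hCB, hB.closure_eq]

theorem isModularPair_iff_mDiv (hB : c.IsClosed B) :
    c.IsModularPair A B ↔ mDiv c A (A ∩ B) B := by
  rw [mDiv_inter_iff hB]
  constructor
  · intro hmod C hABC hCB
    -- apply modularity to the closed set `c C`, which lies between `A ∩ B` and `B`
    have hABcC : A ∩ B ⊆ c C := hABC.trans (c.le_closure C)
    have := hmod (c C) (c.isClosed_closure C) (hB.closure_le_iff.2 hCB)
    have hAcC : c (A ∪ c C) = c (A ∪ C) := c.closure_sup_closure_right A C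
    rwa [hAcC, Set.union_eq_self_of_subset_right hABcC, idempotent] at this
  · intro hdiv C _ hCB
    have hAC : A ∪ (C ∪ A ∩ B) = A ∪ C := by
      rw [Set.union_comm C, ← Set.union_assoc,
        Set.union_eq_self_of_subset_right Set.inter_subset_left]
    simpa only [hAC] using
      hdiv (C ∪ A ∩ B) Set.subset_union_right (Set.union_subset hCB Set.inter_subset_right)

end ClosureOperator

theorem stmt_15_general {α : Type*} (c : Set α → Set α)
    (cmono : ∀ A B : Set α, A ⊆ B → c A ⊆ c B)
    (cext : ∀ A : Set α, A ⊆ c A)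
    (cidem : ∀ A : Set α, c (c A) = c A)
    (A B : Set α) (hB : c B = B) :
    (∀ C : Set α, c C = C → C ⊆ B → c (A ∪ C) ∩ B = c (C ∪ (A ∩ B))) ↔
    mDiv c A (A ∩ B) B :=
  ClosureOperator.isModularPair_iff_mDiv
    (c := { toFun := c, monotone' := cmono, le_closure' := cext, idempotent' := cidem }) hB

/-- Exercise on modular pairs, part (i): for closed sets `A`, `B`,
`(A, B)` is a modular pair iff `A ⫶M_{A∩B} B`. -/
theorem stmt_15 {α : Type*} (c : Set α → Set α)
    (cmono : ∀ A B : Set α, A ⊆ B → c A ⊆ c B)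
    (cext : ∀ A : Set α, A ⊆ c A)
    (cidem : ∀ A : Set α, c (c A) = c A)
    (A B : Set α) (hA : c A = A) (hB : c B = B) :
    (∀ C : Set α, c C = C → C ⊆ B → c (A ∪ C) ∩ B = c (C ∪ (A ∩ B))) ↔
    mDiv c A (A ∩ B) B :=
  stmt_15_general c cmono cext cidem A B hB
end

section
/- Let c be a closure operator on subsets of a type α and define M-dividing independence by A ⫶M_C B iff for every C' with C ⊆ C' ⊆ c(B∪C) one has c(A∪C') ∩ c(B∪C') = c(C'). Then ⫶M is symmetric (A ⫶M_C B iff B ⫶M_C A, for all A, B, C) if and only if the lattice of closed sets is M-symmetric, i.e., for all closed A, B, if (A, B) is a modular pair then (B, A) is a modular pair; here (A, B) is a modular pair means: for every closed C ⊆ B one has c(A∪C) ∩ B = c(C ∪ (A∩B)). -/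
/-- `(A, B)` is a modular pair in the lattice of closed sets. -/
def ModPair {α : Type*} (c : Set α → Set α) (A B : Set α) : Prop :=
  ∀ C : Set α, c C = C → C ⊆ B → c (A ∪ C) ∩ B = c (C ∪ (A ∩ B))

/-!
Since `c(X ∪ c C') = c(X ∪ C')`, only closed `C'` matter in `A ⫶M_C B`, and for a closed `D`
with `c(C) ⊆ D ⊆ c(B ∪ C)` one has `c(B ∪ D) = c(B ∪ C)` and
`c(A ∪ D) = c(c(A ∪ C) ∪ D)`.
Hence `A ⫶M_C B` says exactly that `c(A ∪ C) ∩ c(B ∪ C) = c(C)` and that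
`(c(A ∪ C), c(B ∪ C))` is a modular pair. Symmetry of `⫶M` is therefore symmetry of modular
pairs of closed sets, since every pair `(A, B)` of closed sets is of the form
`(c(A ∪ C), c(B ∪ C))` with `C = A ∩ B` its meet.
-/

namespace ClosureOperator

variable {α : Type*} (c : ClosureOperator (Set α))

theorem closure_union_closure_left (X Y : Set α) : c (c X ∪ Y) = c (X ∪ Y) :=
  c.closure_sup_closure_left X Y

theorem closure_union_closure_right (X Y : Set α) : c (X ∪ c Y) = c (X ∪ Y) :=
  c.closure_sup_closure_right X Y

variable {c}

theorem closure_eq_of_subset_of_subset_closure {X Y : Set α} (hYX : Y ⊆ X) (hXY : X ⊆ c Y) :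
    c X = c Y :=
  (c.le_closure_iff.mp hXY).antisymm (c.monotone hYX)

theorem closure_inter_eq_inter {A B : Set α} (hA : c A = A) (hB : c B = B) :
    c (A ∩ B) = A ∩ B :=
  (c.closure_inf_le A B).trans_eq (by rw [hA, hB]; rfl) |>.antisymm (c.le_closure _)

theorem closure_union_eq_of_subset_of_subset_closure {B C C' : Set α} (hCC' : C ⊆ C')
    (hC'B : C' ⊆ c (B ∪ C)) : c (B ∪ C') = c (B ∪ C) :=
  closure_eq_of_subset_of_subset_closure (Set.union_subset_union_right B hCC')
    (Set.union_subset (Set.subset_union_left.trans (c.le_closure _)) hC'B)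

theorem mDiv_iff_forall_closed {A B C : Set α} :
    mDiv c A C B ↔
      ∀ D, c D = D → c C ⊆ D → D ⊆ c (B ∪ C) → c (A ∪ D) ∩ c (B ∪ C) = D := by
  constructor
  · intro h D hD hCD hDB
    have hC : C ⊆ D := (c.le_closure C).trans hCD
    simpa only [closure_union_eq_of_subset_of_subset_closure hC hDB, hD] using
      h D hC hDB
  · intro h C' hCC' hC'B
    have := h (c C') (c.idempotent C') (c.monotone hCC') (c.le_closure_iff.mp hC'B)
    rwa [closure_union_closure_right,
      ← closure_union_eq_of_subset_of_subset_closure hCC' hC'B] at this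

theorem mDiv_iff_modPair {A B C : Set α} :
    mDiv c A C B ↔ c (A ∪ C) ∩ c (B ∪ C) = c C ∧ ModPair c (c (A ∪ C)) (c (B ∪ C)) := by
  rw [mDiv_iff_forall_closed]
  constructor
  · intro h
    have hmeet : c (A ∪ C) ∩ c (B ∪ C) = c C := by
      simpa only [closure_union_closure_right] using
        h (c C) (c.idempotent C) subset_rfl (c.monotone Set.subset_union_right)
    refine ⟨hmeet, fun D hD hDB => ?_⟩
    have hDC : D ∪ C ⊆ c (B ∪ C) :=
      Set.union_subset hDB (Set.subset_union_right.trans (c.le_closure _))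
    have := h (c (D ∪ C)) (c.idempotent _) (c.monotone Set.subset_union_right)
      (c.le_closure_iff.mp hDC)
    rw [hmeet, closure_union_closure_right, closure_union_closure_left]
    rwa [closure_union_closure_right, ← Set.union_assoc, Set.union_right_comm] at this
  · rintro ⟨hmeet, hmod⟩ D hD hCD hDB
    have hC : C ⊆ D := (c.le_closure C).trans hCD
    have := hmod D hD hDB
    rwa [hmeet, closure_union_closure_left, Set.union_assoc, Set.union_eq_self_of_subset_left hC,
      Set.union_eq_self_of_subset_right hCD, hD] at this

theorem mDiv_inter_iff_modPair {A B : Set α} (hA : c A = A) (hB : c B = B) :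
    mDiv c A (A ∩ B) B ↔ ModPair c A B := by
  rw [mDiv_iff_modPair, Set.union_eq_self_of_subset_right Set.inter_subset_left,
    Set.union_eq_self_of_subset_right Set.inter_subset_right, hA, hB,
    closure_inter_eq_inter hA hB]
  exact and_iff_right rfl

theorem mDiv_symm_iff_modPair_symm :
    (∀ A B C : Set α, mDiv c A C B ↔ mDiv c B C A) ↔
      ∀ A B : Set α, c A = A → c B = B → ModPair c A B → ModPair c B A := by
  constructor
  · intro hsymm A B hA hB hAB
    rw [← mDiv_inter_iff_modPair hB hA, Set.inter_comm, ← hsymm]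
    exact (mDiv_inter_iff_modPair hA hB).mpr hAB
  · intro hmod A B C
    have hdir : ∀ A B : Set α, mDiv c A C B → mDiv c B C A := by
      intro A B h
      rw [mDiv_iff_modPair] at h ⊢
      rw [Set.inter_comm]
      exact ⟨h.1, hmod _ _ (c.idempotent _) (c.idempotent _) h.2⟩
    exact ⟨hdir A B, hdir B A⟩

end ClosureOperator

/-- Exercise on M-symmetry, part (ii): `⫶M` is symmetric iff the lattice
of closed sets is M-symmetric. -/
theorem stmt_16 {α : Type*} (c : Set α → Set α)
    (cmono : ∀ A B : Set α, A ⊆ B → c A ⊆ c B)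
    (cext : ∀ A : Set α, A ⊆ c A)
    (cidem : ∀ A : Set α, c (c A) = c A) :
    (∀ A B C : Set α, mDiv c A C B ↔ mDiv c B C A) ↔
    (∀ A B : Set α, c A = A → c B = B → ModPair c A B → ModPair c B A) :=
  ClosureOperator.mDiv_symm_iff_modPair_symm (c := .mk' c cmono cext fun A => (cidem A).le)
end

section
/- Let L be a first-order language, M an L-structure, φ(x̄; ȳ) an L-formula with free variables split into two finite blocks, b̄ a tuple of elements of M matching ȳ, and C ⊆ M. Then φ(x̄; b̄) divides over C if and only if there exist k < ω and a k-inconsistency witness ψ(ȳ₀, …, ȳ_{k−1}) for φ(x̄; ȳ) such that φ(x̄; b̄) (φ,ψ)-divides over C. -/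
/-! If `φ(x̄;b̄)` divides, witnessed by `k` and `(b̄ᵢ)`, then the formula
`¬ ∃ x̄, ⋀_{i<k} φ(x̄; ȳᵢ)` is a `k`-inconsistency witness that holds of every increasing
`k`-subsequence of `(b̄ᵢ)`; the converse is immediate. -/

open FirstOrder

universe u

/-- `b'` realizes `tp(b/C)` in `M`: `b` and `b'` satisfy the same formulas
with parameters from `C`. -/
def RealizesTp (L : FirstOrder.Language.{u, u}) {M : Type u} [L.Structure M]
    {m : ℕ} (C : Set M) (b b' : Fin m → M) : Prop :=
  ∀ (t : ℕ) (θ : L.Formula (Fin m ⊕ Fin t)) (c : Fin t → M), (∀ i, c i ∈ C) →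
    (θ.Realize (Sum.elim b c) ↔ θ.Realize (Sum.elim b' c))

/-- `ψ(ȳ₀,…,ȳ_{k−1})` is a `k`-inconsistency witness for `φ(x̄;ȳ)` with respect to `M`. -/
def IsIncWitness {L : FirstOrder.Language.{u, u}} (M : Type u) [L.Structure M]
    {n m k : ℕ} (φ : L.Formula (Fin n ⊕ Fin m)) (ψ : L.Formula (Fin k × Fin m)) : Prop :=
  ¬ ∃ (a : Fin n → M) (b : Fin k → Fin m → M),
      (∀ i : Fin k, φ.Realize (Sum.elim a (b i))) ∧ ψ.Realize (fun p => b p.1 p.2)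

/-- `φ(x̄;b̄)` `(φ,ψ)`-divides over `C`. -/
def PhiPsiDivides {L : FirstOrder.Language.{u, u}} {M : Type u} [L.Structure M]
    {n m k : ℕ} (φ : L.Formula (Fin n ⊕ Fin m)) (ψ : L.Formula (Fin k × Fin m))
    (b : Fin m → M) (C : Set M) : Prop :=
  ∃ bs : ℕ → Fin m → M, (∀ i, RealizesTp L C b (bs i)) ∧
    ∀ f : Fin k → ℕ, StrictMono f → ψ.Realize (fun p => bs (f p.1) p.2)

/-- `φ(x̄;b̄)` divides over `C`: there are `k < ω` and a sequence of tuples, each realizing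
`tp(b̄/C)`, such that any `k` of them (taken along a strictly increasing selection of
indices) are simultaneously unsatisfiable. -/
def FormulaDivides {L : FirstOrder.Language.{u, u}} {M : Type u} [L.Structure M]
    {n m : ℕ} (φ : L.Formula (Fin n ⊕ Fin m)) (b : Fin m → M) (C : Set M) : Prop :=
  ∃ (k : ℕ) (bs : ℕ → Fin m → M), (∀ i, RealizesTp L C b (bs i)) ∧
    ∀ f : Fin k → ℕ, StrictMono f →
      ¬ ∃ a : Fin n → M, ∀ j : Fin k, φ.Realize (Sum.elim a (bs (f j)))

noncomputable def witnessFormula {L : FirstOrder.Language.{u, u}}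
    {n m : ℕ} (φ : L.Formula (Fin n ⊕ Fin m)) (k : ℕ) : L.Formula (Fin k × Fin m) :=
  Language.Formula.not <| Language.Formula.iExs (Fin n) <|
    Language.BoundedFormula.iInf
      (fun i : Fin k => φ.relabel (Sum.elim Sum.inr (fun j => Sum.inl (i, j))))

section

variable {L : FirstOrder.Language.{u, u}} {M : Type u} [L.Structure M] {n m : ℕ}
  (φ : L.Formula (Fin n ⊕ Fin m))

theorem realize_witnessFormula {k : ℕ} (v : Fin k × Fin m → M) :
    (witnessFormula φ k).Realize v ↔
      ¬ ∃ a : Fin n → M, ∀ i : Fin k, φ.Realize (Sum.elim a (fun j => v (i, j))) := by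
  rw [witnessFormula, Language.Formula.realize_not, Language.Formula.realize_iExs]
  refine not_congr <| exists_congr fun a => ?_
  rw [Language.Formula.Realize, Language.BoundedFormula.realize_iInf]
  refine forall_congr' fun i => ?_
  change (φ.relabel _).Realize (Sum.elim v a) ↔ _
  rw [Language.Formula.realize_relabel]
  exact iff_of_eq (congrArg _ (funext (Sum.rec (fun _ => rfl) (fun _ => rfl))))

theorem isIncWitness_witnessFormula (k : ℕ) : IsIncWitness M φ (witnessFormula φ k) :=
  fun ⟨a, _, ha, hψ⟩ => (realize_witnessFormula φ _).1 hψ ⟨a, ha⟩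

theorem FormulaDivides.phiPsiDivides_witnessFormula {b : Fin m → M} {C : Set M}
    (h : FormulaDivides φ b C) :
    ∃ k, PhiPsiDivides φ (witnessFormula φ k) b C := by
  obtain ⟨k, bs, hbs, hk⟩ := h
  exact ⟨k, bs, hbs, fun f hf => (realize_witnessFormula φ _).2 (hk f hf)⟩

theorem PhiPsiDivides.formulaDivides {k : ℕ} {ψ : L.Formula (Fin k × Fin m)} {b : Fin m → M}
    {C : Set M} (hψ : IsIncWitness M φ ψ) (h : PhiPsiDivides φ ψ b C) :
    FormulaDivides φ b C := by
  obtain ⟨bs, hbs, hdiv⟩ := h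
  exact ⟨k, bs, hbs, fun f hf ⟨a, ha⟩ => hψ ⟨a, fun i => bs (f i), ha, hdiv f hf⟩⟩

end

/-- Exercise: dividing via inconsistency witnesses: `φ(x̄;b̄)` divides
over `C` iff there are `k < ω` and a `k`-inconsistency witness `ψ` for `φ` such that
`φ(x̄;b̄)` `(φ,ψ)`-divides over `C`. -/
theorem stmt_17 {L : FirstOrder.Language.{u, u}} {M : Type u} [L.Structure M]
    {n m : ℕ} (φ : L.Formula (Fin n ⊕ Fin m)) (b : Fin m → M) (C : Set M) :
    FormulaDivides φ b C ↔
    ∃ (k : ℕ) (ψ : L.Formula (Fin k × Fin m)),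
      IsIncWitness M φ ψ ∧ PhiPsiDivides φ ψ b C := by
  constructor
  · intro h
    obtain ⟨k, hk⟩ := h.phiPsiDivides_witnessFormula
    exact ⟨k, witnessFormula φ k, isIncWitness_witnessFormula φ k, hk⟩
  · rintro ⟨k, ψ, hψ, h⟩
    exact h.formulaDivides φ hψ
end

section
/- Let α be a type of cardinality at least ℵ₂, call a subset of α small if its cardinality is strictly less than that of α, and define A ⫶_C B iff (A∩B)∖C is countable. Then: ⫶ satisfies, for all subsets of α, invariance under every permutation of α, monotonicity, base monotonicity, transitivity, normality and symmetry; it satisfies local character with κ(A) = |A|⁺; for all small A, B, C, B̂ with B ⊆ B̂, if A ⫶_C B then there is a permutation g of α fixing B∪C pointwise with g·A ⫶_C B̂ (extension), and for all small A, B, C there is a permutation g of α fixing C pointwise with g·A ⫶_C B (existence); but ⫶ fails finite character: there are small sets A, B, C (namely A = B of cardinality ℵ₁ and C = ∅) such that A₀ ⫶_C B for every finite A₀ ⊆ A yet not A ⫶_C B. -/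
/-!
Invariance through local character reduce to elementary set algebra on `(A ∩ B) \ C` together with
closure of countable sets under subsets, unions and injective images. For extension and existence,
a permutation fixing `B ∪ C` moves `A \ (B ∪ C)` into the complement of a small set, which is
still of full cardinality; afterwards `g '' A` meets `B̂` outside `C` only inside `(A ∩ B) \ C`.
Finite character fails because finite sets are countable while a set of size `ℵ₁` is not.
-/

universe u

/-- The relation of Example 1.5.5: `A ⫶_C B` iff `(A ∩ B) \ C` is countable. -/
def cInd {α : Type u} (A C B : Set α) : Prop := ((A ∩ B) \ C).Countable

def SmallSet {α : Type u} (S : Set α) : Prop := Cardinal.mk ↥S < Cardinal.mk α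

open Cardinal Set

namespace cInd

variable {α : Type u} {A B C D : Set α}

theorem image {β : Type*} {f : α → β} (hf : Function.Injective f) (h : cInd A C B) :
    cInd (f '' A) (f '' C) (f '' B) := by
  simpa only [cInd, image_sdiff hf, image_inter hf] using Set.Countable.image h f

theorem mono {A' B' : Set α} (h : cInd A C B) (hA : A' ⊆ A) (hB : B' ⊆ B) : cInd A' C B' :=
  Set.Countable.mono (sdiff_subset_sdiff_left (inter_subset_inter hA hB)) h

theorem mono_base (hDC : D ⊆ C) (h : cInd A D B) : cInd A C B :=
  Set.Countable.mono (sdiff_subset_sdiff_right hDC) h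

theorem trans (hBC : cInd B C A) (hCD : cInd C D A) : cInd B D A := by
  refine Set.Countable.mono (fun x ⟨⟨hxB, hxA⟩, hxD⟩ => ?_) (Set.Countable.union hBC hCD)
  by_cases hxC : x ∈ C
  · exact Or.inr ⟨⟨hxC, hxA⟩, hxD⟩
  · exact Or.inl ⟨⟨hxB, hxA⟩, hxC⟩

theorem union_base (h : cInd A C B) : cInd (A ∪ C) C B := by
  refine Set.Countable.mono (fun x ⟨⟨hxAC, hxB⟩, hxC⟩ => ?_) h
  exact ⟨⟨hxAC.resolve_right hxC, hxB⟩, hxC⟩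

theorem comm : cInd A C B ↔ cInd B C A := by
  rw [cInd, cInd, inter_comm]

theorem inter_base : cInd A (A ∩ B) B := by
  simp [cInd]

theorem of_finite (hA : A.Finite) : cInd A C B :=
  hA.countable.mono (sdiff_subset.trans inter_subset_left)

theorem not_self_of_not_countable (hA : ¬A.Countable) : ¬cInd A ∅ A := by
  simpa [cInd] using hA

end cInd

section Permutations

variable {α : Type u}

theorem SmallSet.union (hα : ℵ₀ ≤ #α) {S T : Set α} (hS : SmallSet S) (hT : SmallSet T) :
    SmallSet (S ∪ T) :=
  (mk_union_le S T).trans_lt (add_lt_of_lt hα hS hT)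

theorem smallSet_empty [Nonempty α] : SmallSet (∅ : Set α) := by
  simpa [SmallSet] using pos_iff_ne_zero.2 (mk_ne_zero α)

theorem exists_perm_swap_of_disjoint {S T : Set α} (hST : Disjoint S T) (e : S ≃ T) :
    ∃ g : Equiv.Perm α, (∀ x, x ∉ S → x ∉ T → g x = x) ∧ ∀ x ∈ S, g x ∈ T := by
  classical
  let σ : Equiv.Perm ↥(S ∪ T) := (Equiv.Set.union hST).trans
    ((e.sumCongr e.symm).trans ((Equiv.sumComm T S).trans (Equiv.Set.union hST).symm))
  refine ⟨Equiv.Perm.ofSubtype σ, fun x hxS hxT => ?_, fun x hxS => ?_⟩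
  · exact Equiv.Perm.ofSubtype_apply_of_not_mem σ (not_or.2 ⟨hxS, hxT⟩)
  · rw [Equiv.Perm.ofSubtype_apply_of_mem σ (Or.inl hxS)]
    simp [σ, Equiv.Set.union_apply_left hST (a := ⟨x, Or.inl hxS⟩) hxS]

theorem exists_perm_fixing_image_disjoint (hα : ℵ₀ ≤ #α) {S F X : Set α} (hSF : Disjoint S F)
    (hS : SmallSet S) (hF : SmallSet F) (hX : SmallSet X) :
    ∃ g : Equiv.Perm α, (∀ x ∈ F, g x = x) ∧ Disjoint (g '' S) X := by
  have : Infinite α := infinite_iff.2 hα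
  set U := S ∪ F ∪ X
  have hU : #↥Uᶜ = #α := mk_compl_of_infinite U ((hS.union hα hF).union hα hX)
  obtain ⟨T, hTU, hT⟩ := le_mk_iff_exists_subset.1 (hU ▸ hS.le)
  have hST : Disjoint S T := disjoint_left.2 fun x hxS hxT => hTU hxT (.inl (.inl hxS))
  obtain ⟨g, hfix, hmove⟩ := exists_perm_swap_of_disjoint hST (Cardinal.eq.1 hT).some.symm
  refine ⟨g, fun x hxF => hfix x (disjoint_right.1 hSF hxF) fun hxT => hTU hxT (.inl (.inr hxF)),
    disjoint_left.2 ?_⟩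
  rintro _ ⟨x, hxS, rfl⟩ hgx
  exact hTU (hmove x hxS) (.inr hgx)

theorem exists_perm_fixing_cInd_of_cInd (hα : ℵ₀ ≤ #α) {A B C B' : Set α} (hA : SmallSet A)
    (hB : SmallSet B) (hC : SmallSet C) (hB' : SmallSet B') (h : cInd A C B) :
    ∃ g : Equiv.Perm α, (∀ x ∈ B ∪ C, g x = x) ∧ cInd (g '' A) C B' := by
  obtain ⟨g, hfix, hdisj⟩ := exists_perm_fixing_image_disjoint hα disjoint_sdiff_left
    ((mk_le_mk_of_subset sdiff_subset).trans_lt hA) (hB.union hα hC) hB'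
  refine ⟨g, hfix, Set.Countable.mono ?_ h⟩
  rintro _ ⟨⟨⟨a, haA, rfl⟩, hgaB'⟩, hgaC⟩
  by_cases haBC : a ∈ B ∪ C
  · rw [hfix a haBC] at hgaB' hgaC ⊢
    exact ⟨⟨haA, haBC.resolve_right hgaC⟩, hgaC⟩
  · exact (disjoint_left.1 hdisj ⟨a, ⟨haA, haBC⟩, rfl⟩ hgaB').elim

theorem exists_perm_fixing_cInd (hα : ℵ₀ ≤ #α) {A B C : Set α} (hA : SmallSet A)
    (hB : SmallSet B) (hC : SmallSet C) :
    ∃ g : Equiv.Perm α, (∀ x ∈ C, g x = x) ∧ cInd (g '' A) C B := by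
  have : Nonempty α := (infinite_iff.2 hα).nonempty
  obtain ⟨g, hfix, hind⟩ :=
    exists_perm_fixing_cInd_of_cInd hα hA smallSet_empty hC hB (by simp [cInd])
  exact ⟨g, fun x hx => hfix x (.inr hx), hind⟩

end Permutations

/-- Example: no finite character: on a type of cardinality at least `ℵ₂`,
the relation `A ⫶_C B ↔ (A∩B)∖C` countable satisfies invariance (under all permutations),
monotonicity, base monotonicity, transitivity, normality, symmetry, local character with
`κ(A) = |A|⁺`, extension and existence among small sets, but fails finite character,
witnessed by `A = B` of cardinality `ℵ₁` and `C = ∅`. -/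
theorem stmt_19 {α : Type u} (hα : Cardinal.aleph 2 ≤ Cardinal.mk α) :
    (∀ (g : Equiv.Perm α) (A B C : Set α),
      cInd A C B → cInd (⇑g '' A) (⇑g '' C) (⇑g '' B)) ∧
    (∀ A B C A' B' : Set α, cInd A C B → A' ⊆ A → B' ⊆ B → cInd A' C B') ∧
    (∀ A B C D : Set α, D ⊆ C → C ⊆ B → cInd A D B → cInd A C B) ∧
    (∀ A B C D : Set α, D ⊆ C → C ⊆ B → cInd B C A → cInd C D A → cInd B D A) ∧
    (∀ A B C : Set α, cInd A C B → cInd (A ∪ C) C B) ∧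
    (∀ A B C : Set α, cInd A C B ↔ cInd B C A) ∧
    (∀ A B : Set α, ∃ C : Set α, C ⊆ B ∧
      Cardinal.mk ↥C < Order.succ (Cardinal.mk ↥A) ∧ cInd A C B) ∧
    (∀ A B C Bhat : Set α, SmallSet A → SmallSet B → SmallSet C → SmallSet Bhat →
      B ⊆ Bhat → cInd A C B →
      ∃ g : Equiv.Perm α, (∀ x ∈ B ∪ C, g x = x) ∧ cInd (⇑g '' A) C Bhat) ∧
    (∀ A B C : Set α, SmallSet A → SmallSet B → SmallSet C →
      ∃ g : Equiv.Perm α, (∀ x ∈ C, g x = x) ∧ cInd (⇑g '' A) C B) ∧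
    (∃ A B C : Set α, SmallSet A ∧ SmallSet B ∧ SmallSet C ∧
      A = B ∧ Cardinal.mk ↥A = Cardinal.aleph 1 ∧ C = ∅ ∧
      (∀ A₀ : Set α, A₀ ⊆ A → A₀.Finite → cInd A₀ C B) ∧ ¬ cInd A C B) := by
  have hinf : ℵ₀ ≤ #α := (aleph0_le_aleph 2).trans hα
  have : Nonempty α := (infinite_iff.2 hinf).nonempty
  obtain ⟨A, hA⟩ :=
    le_mk_iff_exists_set.1 ((aleph_le_aleph.2 (by norm_num : (1 : Ordinal) ≤ 2)).trans hα)
  have hAsmall : SmallSet A := by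
    rw [SmallSet, hA]
    exact (aleph_lt_aleph.2 (by norm_num)).trans_le hα
  have hAunc : ¬A.Countable := by
    rw [← le_aleph0_iff_set_countable, hA, not_le]
    exact aleph0_lt_aleph_one
  refine ⟨fun g _ _ _ h => h.image g.injective, fun _ _ _ _ _ h => h.mono,
    fun _ _ _ _ hDC _ => cInd.mono_base hDC, fun _ _ _ _ _ _ => cInd.trans,
    fun _ _ _ => cInd.union_base, fun _ _ _ => cInd.comm,
    fun A B => ⟨A ∩ B, inter_subset_right,
      Order.lt_succ_iff.2 (mk_le_mk_of_subset inter_subset_left), cInd.inter_base⟩,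
    fun _ _ _ _ hA hB hC hB' _ => exists_perm_fixing_cInd_of_cInd hinf hA hB hC hB',
    fun _ _ _ hA hB hC => exists_perm_fixing_cInd hinf hA hB hC,
    ⟨A, A, ∅, hAsmall, hAsmall, smallSet_empty, rfl, hA, rfl, fun _ _ h => cInd.of_finite h,
      cInd.not_self_of_not_countable hAunc⟩⟩
end
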